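/- Let A be a strictly positive operator on H, T ∈ B_A(H), and P = T^{♯A}T + TT^{♯A}. Then w_A(T)⁴ ≥ (1/4)C_A(T²)² + (1/8)c_A(T²P + PT²) + (1/16)‖P‖_A², where C_A(S) = inf_{‖x‖_A=1} inf_{φ∈ℝ} ‖Re_A(e^{iφ}S)x‖_A and c_A(S) = inf{|⟨Sx,x⟩_A| : ‖x‖_A = 1}. -/

import Mathlib

noncomputable section
open Complex ContinuousLinearMap

variable {H : Type*} [NormedAddCommGroup H] [InnerProductSpace ℂ H] [CompleteSpace H]

/-- The `A`-inner product `⟨x,y⟩_A = ⟨Ax,y⟩`. -/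
def innA (A : H →L[ℂ] H) (x y : H) : ℂ := inner ℂ (A x) y

/-- The `A`-seminorm of a vector, `‖x‖_A = √⟨x,x⟩_A`. -/
def vnormA (A : H →L[ℂ] H) (x : H) : ℝ := Real.sqrt (innA A x x).re

/-- The `A`-numerical radius `w_A(T) = sup{|⟨Tx,x⟩_A| : ‖x‖_A = 1}`. -/
def wA (A T : H →L[ℂ] H) : ℝ :=
  sSup {r : ℝ | ∃ x : H, vnormA A x = 1 ∧ r = ‖innA A (T x) x‖}

/-- The `A`-operator seminorm, `sup` over `A`-unit vectors in the closure of the range of `A`. -/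
def opNormA (A T : H →L[ℂ] H) : ℝ :=
  sSup {r : ℝ | ∃ x : H, x ∈ closure (Set.range A) ∧ vnormA A x = 1 ∧ r = vnormA A (T x)}

/-- The `A`-operator seminorm, `sup` over all `A`-unit vectors (used when `A > 0`). -/
def opNormA' (A T : H →L[ℂ] H) : ℝ :=
  sSup {r : ℝ | ∃ x : H, vnormA A x = 1 ∧ r = vnormA A (T x)}

/-- The `A`-Crawford number `c_A(T) = inf{|⟨Tx,x⟩_A| : ‖x‖_A = 1}`. -/
def cA (A T : H →L[ℂ] H) : ℝ :=
  sInf {r : ℝ | ∃ x : H, vnormA A x = 1 ∧ r = ‖innA A (T x) x‖}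

/-- The `A`-minimum modulus `m_A(T) = inf{‖Tx‖_A : ‖x‖_A = 1}` (version for `A > 0`). -/
def mA (A T : H →L[ℂ] H) : ℝ :=
  sInf {r : ℝ | ∃ x : H, vnormA A x = 1 ∧ r = vnormA A (T x)}

/-- `S` is an `A`-adjoint of `T`, i.e. `A S = T* A`. -/
def IsAAdjoint (A T S : H →L[ℂ] H) : Prop :=
  A.comp S = (ContinuousLinearMap.adjoint T).comp A

/-- `A` is strictly positive: positive and `⟨Ax,x⟩ > 0` for all `x ≠ 0`. -/
def StrictPos (A : H →L[ℂ] H) : Prop :=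
  A.IsPositive ∧ ∀ x : H, x ≠ 0 → 0 < (innA A x x).re

/-- The inner product on `H ⊕ H`. -/
def inn2 (u v : H × H) : ℂ := inner ℂ u.1 v.1 + inner ℂ u.2 v.2

/-- `B = diag(A, A)` acting on `H ⊕ H`. -/
def Bop (A : H →L[ℂ] H) : H × H →L[ℂ] H × H := A.prodMap A

/-- The `B`-seminorm on `H ⊕ H`. -/
def vnormB (A : H →L[ℂ] H) (u : H × H) : ℝ := Real.sqrt (inn2 (Bop A u) u).re

/-- The `B`-numerical radius on `H ⊕ H`, where `B = diag(A, A)`. -/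
def wB (A : H →L[ℂ] H) (S : H × H →L[ℂ] H × H) : ℝ :=
  sSup {r : ℝ | ∃ u : H × H, vnormB A u = 1 ∧ r = ‖inn2 (Bop A (S u)) u‖}

/-- The `2 × 2` operator matrix `[[X, Y], [Z, W]]` acting on `H ⊕ H`. -/
def blk (X Y Z W : H →L[ℂ] H) : H × H →L[ℂ] H × H :=
  ((X.comp (ContinuousLinearMap.fst ℂ H H)) + (Y.comp (ContinuousLinearMap.snd ℂ H H))).prod
    ((Z.comp (ContinuousLinearMap.fst ℂ H H)) + (W.comp (ContinuousLinearMap.snd ℂ H H)))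

/-!
Fix an `A`-unit vector `x`, put `P = T^{♯A}T + TT^{♯A}`, `z = ⟨(T²P + PT²)x, x⟩_A` and
`G = Re_A(e^{iθ}T)` with `θ = arg z / 2`. Then `G` is `A`-selfadjoint with
`|⟨Gy, y⟩_A| ≤ w_A(T)‖y‖_A²`, so `‖Gy‖_A ≤ w_A(T)‖y‖_A` and `‖G²x‖_A² ≤ w_A(T)⁴`. On the other hand
`G² = P/4 + Re_A(e^{2iθ}T²)/2`, and the choice of `θ` turns the cross term of `‖G²x‖_A²` into
`|z|/8 ≥ c_A(T²P + PT²)/8`, while the other two terms are `‖Px‖_A²/16` and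
`‖Re_A(e^{2iθ}T²)x‖_A²/4 ≥ C_A(T²)²/4`. Taking the supremum over `x` gives the claim.

`A` need not be invertible: the semi-inner product is `⟨x, y⟩_A = ⟨√A x, √A y⟩`, and `T` is
`A`-bounded (so that `w_A(T)` is a genuine supremum) because `R = T^{♯A}T` is `A`-selfadjoint:
then `‖R^{2^k}x‖_A² ≤ ‖x‖_A ‖R^{2^{k+1}}x‖_A`, while `‖R^n x‖_A ≤ ‖√A‖‖R‖^n‖x‖`, which together
force `‖Rx‖_A ≤ ‖R‖‖x‖_A`.
-/

open scoped InnerProductSpace ComplexConjugate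

theorem le_of_sq_le_succ {β : ℕ → ℝ} {q M : ℝ} (hβ : ∀ k, 0 ≤ β k) (hq : 0 ≤ q)
    (hsq : ∀ k, β k ^ 2 ≤ β (k + 1)) (hM : ∀ k, β k ≤ M * q ^ 2 ^ k) : β 0 ≤ q := by
  have hpow : ∀ k, β 0 ^ 2 ^ k ≤ β k := by
    intro k
    induction k with
    | zero => simp
    | succ k ih =>
      calc β 0 ^ 2 ^ (k + 1) = (β 0 ^ 2 ^ k) ^ 2 := by rw [pow_succ, pow_mul]
        _ ≤ β k ^ 2 := pow_le_pow_left₀ (pow_nonneg (hβ 0) _) ih 2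
        _ ≤ β (k + 1) := hsq k
  by_contra! hlt
  have hβ0 : 0 < β 0 := hq.trans_lt hlt
  have hρ : ∀ k, 1 ≤ M * (q / β 0) ^ 2 ^ k := by
    intro k
    rw [div_pow, ← mul_div_assoc, le_div_iff₀ (by positivity), one_mul]
    exact (hpow k).trans (hM k)
  have hlim : Filter.Tendsto (fun k : ℕ => M * (q / β 0) ^ 2 ^ k) Filter.atTop (nhds 0) := by
    simpa using ((tendsto_pow_atTop_nhds_zero_of_lt_one (div_nonneg hq hβ0.le)
      ((div_lt_one hβ0).mpr hlt)).comp (tendsto_pow_atTop_atTop_of_one_lt one_lt_two)).const_mul M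
  linarith [ge_of_tendsto' hlim hρ]

theorem conj_exp_ofReal_mul_I (φ : ℝ) :
    conj (Complex.exp (φ * Complex.I)) = Complex.exp (-(φ * Complex.I)) := by
  rw [← Complex.exp_conj, map_mul, Complex.conj_ofReal, Complex.conj_I, mul_neg]

theorem conj_exp_neg_ofReal_mul_I (φ : ℝ) :
    conj (Complex.exp (-(φ * Complex.I))) = Complex.exp (φ * Complex.I) := by
  rw [← conj_exp_ofReal_mul_I, Complex.conj_conj]

theorem exp_neg_arg_mul_I_mul_self (z : ℂ) : Complex.exp (-(z.arg * Complex.I)) * z = ‖z‖ := by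
  nth_rewrite 2 [← Complex.norm_mul_exp_arg_mul_I z]
  rw [mul_left_comm, ← Complex.exp_add, neg_add_cancel, Complex.exp_zero, mul_one]

section SemiInner
variable {A : H →L[ℂ] H}

omit [CompleteSpace H] in
theorem vnormA_nonneg (A : H →L[ℂ] H) (x : H) : 0 ≤ vnormA A x :=
  Real.sqrt_nonneg _

omit [CompleteSpace H] in
theorem innA_add_left (A : H →L[ℂ] H) (x y z : H) :
    innA A (x + y) z = innA A x z + innA A y z := by
  rw [innA, innA, innA, map_add, inner_add_left]

omit [CompleteSpace H] in
theorem innA_add_right (A : H →L[ℂ] H) (x y z : H) :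
    innA A x (y + z) = innA A x y + innA A x z :=
  inner_add_right _ _ _

omit [CompleteSpace H] in
theorem innA_smul_left (A : H →L[ℂ] H) (c : ℂ) (x y : H) :
    innA A (c • x) y = conj c * innA A x y := by
  rw [innA, innA, map_smul, inner_smul_left]

omit [CompleteSpace H] in
theorem innA_smul_right (A : H →L[ℂ] H) (c : ℂ) (x y : H) :
    innA A x (c • y) = c * innA A x y :=
  inner_smul_right _ _ _

theorem innA_conj_symm (hA : IsSelfAdjoint A) (x y : H) : conj (innA A y x) = innA A x y := by
  rw [innA, innA, inner_conj_symm, ← adjoint_inner_left, hA.adjoint_eq]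

theorem innA_eq_inner_sqrt (hA : A.IsPositive) (x y : H) :
    innA A x y = ⟪CFC.sqrt A x, CFC.sqrt A y⟫_ℂ := by
  rw [innA]
  conv_lhs => rw [← CFC.sqrt_mul_sqrt_self A ((nonneg_iff_isPositive A).mpr hA)]
  rw [mul_apply_eq_comp, ← adjoint_inner_right, (CFC.sqrt_nonneg A).isSelfAdjoint.adjoint_eq]

theorem vnormA_eq_norm_sqrt (hA : A.IsPositive) (x : H) : vnormA A x = ‖CFC.sqrt A x‖ := by
  rw [vnormA, innA_eq_inner_sqrt hA, inner_self_eq_norm_sq_to_K]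
  norm_cast
  exact Real.sqrt_sq (norm_nonneg _)

theorem re_innA_self (hA : A.IsPositive) (x : H) : (innA A x x).re = vnormA A x ^ 2 := by
  rw [innA_eq_inner_sqrt hA, vnormA_eq_norm_sqrt hA, inner_self_eq_norm_sq_to_K]
  norm_cast

theorem norm_innA_le (hA : A.IsPositive) (x y : H) :
    ‖innA A x y‖ ≤ vnormA A x * vnormA A y := by
  rw [innA_eq_inner_sqrt hA, vnormA_eq_norm_sqrt hA, vnormA_eq_norm_sqrt hA]
  exact norm_inner_le_norm _ _

theorem vnormA_smul (hA : A.IsPositive) (c : ℂ) (x : H) :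
    vnormA A (c • x) = ‖c‖ * vnormA A x := by
  rw [vnormA_eq_norm_sqrt hA, vnormA_eq_norm_sqrt hA, map_smul, norm_smul]

theorem vnormA_add_sq (hA : A.IsPositive) (u v : H) :
    vnormA A (u + v) ^ 2 = vnormA A u ^ 2 + 2 * (innA A u v).re + vnormA A v ^ 2 := by
  simp only [vnormA_eq_norm_sqrt hA, innA_eq_inner_sqrt hA, map_add]
  exact norm_add_sq (𝕜 := ℂ) _ _

theorem parallelogram_law_vnormA (hA : A.IsPositive) (u v : H) :
    vnormA A (u + v) ^ 2 + vnormA A (u - v) ^ 2 = 2 * (vnormA A u ^ 2 + vnormA A v ^ 2) := by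
  simp only [vnormA_eq_norm_sqrt hA, map_add, map_sub]
  exact parallelogram_law_with_norm ℂ _ _

end SemiInner

/-- `Re_A(e^{iφ}T)`, with `S` standing for `T^{♯A}`. -/
def realPartRot (T S : H →L[ℂ] H) (φ : ℝ) : H →L[ℂ] H :=
  (2:ℂ)⁻¹ • (Complex.exp (φ * Complex.I) • T + Complex.exp (-(φ * Complex.I)) • S)

/-- The paper's `C_A(T)`, with `S` standing for `T^{♯A}`. -/
def CA (A T S : H →L[ℂ] H) : ℝ :=
  sInf {v : ℝ | ∃ x : H, ∃ φ : ℝ, vnormA A x = 1 ∧ v = vnormA A (realPartRot T S φ x)}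

omit [CompleteSpace H] in
theorem realPartRot_half_sq (T S : H →L[ℂ] H) (φ : ℝ) :
    realPartRot T S (φ / 2) ^ 2
      = (4:ℂ)⁻¹ • (S * T + T * S) + (2:ℂ)⁻¹ • realPartRot (T ^ 2) (S ^ 2) φ := by
  have he : Complex.exp (↑(φ / 2) * Complex.I) * Complex.exp (↑(φ / 2) * Complex.I)
      = Complex.exp (φ * Complex.I) := by
    rw [← Complex.exp_add]; push_cast; ring_nf
  have he' : Complex.exp (-(↑(φ / 2) * Complex.I)) * Complex.exp (-(↑(φ / 2) * Complex.I))
      = Complex.exp (-(φ * Complex.I)) := by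
    rw [← Complex.exp_add]; push_cast; ring_nf
  have hee' : Complex.exp (↑(φ / 2) * Complex.I) * Complex.exp (-(↑(φ / 2) * Complex.I)) = 1 := by
    rw [← Complex.exp_add, add_neg_cancel, Complex.exp_zero]
  have he'e : Complex.exp (-(↑(φ / 2) * Complex.I)) * Complex.exp (↑(φ / 2) * Complex.I) = 1 := by
    rw [mul_comm, hee']
  simp only [realPartRot, sq, mul_add, add_mul, smul_mul_smul_comm, he, he', hee', he'e]
  module

namespace IsAAdjoint
variable {A T S T' S' R : H →L[ℂ] H}

theorem innA_apply_right (h : IsAAdjoint A T S) (x y : H) :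
    innA A x (T y) = innA A (S x) y := by
  rw [innA, innA, ← adjoint_inner_left, ← comp_apply, ← h, comp_apply]

theorem symm (hA : IsSelfAdjoint A) (h : IsAAdjoint A T S) : IsAAdjoint A S T := by
  have := congrArg adjoint h
  rwa [adjoint_comp, adjoint_comp, hA.adjoint_eq, adjoint_adjoint, eq_comm] at this

theorem innA_apply_left (hA : IsSelfAdjoint A) (h : IsAAdjoint A T S) (x y : H) :
    innA A (T x) y = innA A x (S y) :=
  ((h.symm hA).innA_apply_right x y).symm

theorem add (h : IsAAdjoint A T S) (h' : IsAAdjoint A T' S') :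
    IsAAdjoint A (T + T') (S + S') := by
  simp only [IsAAdjoint, comp_add, map_add, add_comp] at *
  rw [h, h']

theorem smul (h : IsAAdjoint A T S) (c : ℂ) : IsAAdjoint A (c • T) (conj c • S) := by
  simp only [IsAAdjoint, comp_smul, map_smulₛₗ adjoint, smul_comp] at *
  rw [h]

theorem mul (h : IsAAdjoint A T S) (h' : IsAAdjoint A T' S') :
    IsAAdjoint A (T * T') (S' * S) := by
  simp only [IsAAdjoint, mul_def, adjoint_comp] at *
  rw [← comp_assoc, h', comp_assoc, h, comp_assoc]

theorem pow (h : IsAAdjoint A T S) (n : ℕ) : IsAAdjoint A (T ^ n) (S ^ n) := by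
  induction n with
  | zero =>
    simp only [pow_zero, IsAAdjoint, adjoint_one]
    exact (mul_one A).trans (one_mul A).symm
  | succ n ih => rw [pow_succ, pow_succ']; exact ih.mul h

theorem realPartRot (hA : IsSelfAdjoint A) (h : IsAAdjoint A T S) (φ : ℝ) :
    IsAAdjoint A (realPartRot T S φ) (realPartRot T S φ) := by
  have := ((h.smul (Complex.exp (φ * Complex.I))).add
    ((h.symm hA).smul (Complex.exp (-(φ * Complex.I))))).smul (2:ℂ)⁻¹
  rwa [conj_exp_ofReal_mul_I, conj_exp_neg_ofReal_mul_I, add_comm (_ • S), map_inv₀,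
    map_ofNat] at this

theorem sq_vnormA_apply_le_vnormA_mul (hA : A.IsPositive) (hR : IsAAdjoint A R R) (x : H) :
    vnormA A (R x) ^ 2 ≤ vnormA A x * vnormA A (R (R x)) := by
  rw [← re_innA_self hA, hR.innA_apply_left hA.isSelfAdjoint]
  exact (Complex.re_le_norm _).trans (norm_innA_le hA _ _)

theorem vnormA_apply_le_opNorm_mul (hA : A.IsPositive) (hR : IsAAdjoint A R R) (x : H) :
    vnormA A (R x) ≤ ‖R‖ * vnormA A x := by
  have hsq : ∀ n, vnormA A ((R ^ n) x) ^ 2 ≤ vnormA A x * vnormA A ((R ^ (2 * n)) x) := by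
    intro n
    rw [two_mul, pow_add, mul_apply_eq_comp]
    exact (hR.pow n).sq_vnormA_apply_le_vnormA_mul hA x
  have hbound : ∀ k, vnormA A ((R ^ 2 ^ k) x) ≤ ‖CFC.sqrt A‖ * ‖x‖ * ‖R‖ ^ 2 ^ k := by
    intro k
    rw [vnormA_eq_norm_sqrt hA]
    calc ‖CFC.sqrt A ((R ^ 2 ^ k) x)‖ ≤ ‖CFC.sqrt A‖ * (‖R ^ 2 ^ k‖ * ‖x‖) :=
          (CFC.sqrt A).le_opNorm_of_le ((R ^ 2 ^ k).le_opNorm x)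
      _ ≤ ‖CFC.sqrt A‖ * (‖R‖ ^ 2 ^ k * ‖x‖) := by
          gcongr; exact norm_pow_le' R (by positivity)
      _ = _ := by ring
  rcases (vnormA_nonneg A x).eq_or_lt with ha | ha
  · have := hsq 1
    rw [← ha, zero_mul, pow_one] at this
    rw [← ha, mul_zero]
    exact (sq_nonpos_iff _).mp this |>.le
  · have := le_of_sq_le_succ (β := fun k => vnormA A ((R ^ 2 ^ k) x) / vnormA A x)
      (M := ‖CFC.sqrt A‖ * ‖x‖ / vnormA A x)
      (fun k => div_nonneg (vnormA_nonneg A _) ha.le) (norm_nonneg R)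
      (fun k => by
        rw [div_pow, div_le_div_iff₀ (by positivity) ha, pow_succ 2 k, mul_comm _ 2,
          sq (vnormA A x), ← mul_assoc]
        exact mul_le_mul_of_nonneg_right (by linarith [hsq (2 ^ k)]) ha.le)
      (fun k => by
        rw [div_mul_eq_mul_div, div_le_div_iff_of_pos_right ha]
        exact hbound k)
    exact (div_le_iff₀ ha).mp (by simpa using this)

theorem sq_vnormA_apply_le_opNorm_mul (hA : A.IsPositive) (h : IsAAdjoint A T S) (x : H) :
    vnormA A (T x) ^ 2 ≤ ‖S * T‖ * vnormA A x ^ 2 := by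
  have hST : IsAAdjoint A (S * T) (S * T) := (h.symm hA.isSelfAdjoint).mul h
  calc vnormA A (T x) ^ 2 = (innA A x ((S * T) x)).re := by
        rw [← re_innA_self hA, h.innA_apply_left hA.isSelfAdjoint, mul_apply_eq_comp]
    _ ≤ vnormA A x * vnormA A ((S * T) x) := (Complex.re_le_norm _).trans (norm_innA_le hA _ _)
    _ ≤ vnormA A x * (‖S * T‖ * vnormA A x) :=
        mul_le_mul_of_nonneg_left (hST.vnormA_apply_le_opNorm_mul hA x) (vnormA_nonneg A x)
    _ = ‖S * T‖ * vnormA A x ^ 2 := by ring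

theorem two_mul_re_innA_le (hA : A.IsPositive) (hR : IsAAdjoint A R R) {w : ℝ}
    (hnum : ∀ y, ‖innA A (R y) y‖ ≤ w * vnormA A y ^ 2) (u v : H) :
    2 * (innA A (R u) v).re ≤ w * (vnormA A u ^ 2 + vnormA A v ^ 2) := by
  have hvu : (innA A (R v) u).re = (innA A (R u) v).re := by
    rw [hR.innA_apply_left hA.isSelfAdjoint, ← innA_conj_symm hA.isSelfAdjoint v (R u),
      Complex.conj_re]
  have hpol : (innA A (R (u + v)) (u + v)).re - (innA A (R (u - v)) (u - v)).re
      = 4 * (innA A (R u) v).re := by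
    simp only [innA, map_add, map_sub, inner_add_left, inner_add_right, inner_sub_left,
      inner_sub_right, Complex.add_re, Complex.sub_re] at hvu ⊢
    linarith
  have hplus := (Complex.re_le_norm _).trans (hnum (u + v))
  have hminus := ((neg_le_abs _).trans (Complex.abs_re_le_norm _)).trans (hnum (u - v))
  linear_combination (hplus + hminus - hpol + w * parallelogram_law_vnormA hA u v) / 2

theorem sq_vnormA_apply_le_of_norm_innA_le (hA : A.IsPositive) (hR : IsAAdjoint A R R)
    {w : ℝ} (hw : 0 ≤ w) (hnum : ∀ y, ‖innA A (R y) y‖ ≤ w * vnormA A y ^ 2) (y : H) :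
    vnormA A (R y) ^ 2 ≤ w ^ 2 * vnormA A y ^ 2 := by
  have key : ∀ t : ℝ,
      2 * t * vnormA A (R y) ^ 2 ≤ w * (vnormA A y ^ 2 + t ^ 2 * vnormA A (R y) ^ 2) := by
    intro t
    have := hR.two_mul_re_innA_le hA hnum y ((t : ℂ) • R y)
    rwa [innA_smul_right, Complex.re_ofReal_mul, re_innA_self hA, vnormA_smul hA,
      Complex.norm_real, Real.norm_eq_abs, mul_pow, sq_abs, ← mul_assoc] at this
  rcases hw.eq_or_lt with rfl | hw
  · nlinarith [key 1]
  · have := key w⁻¹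
    field_simp at this
    nlinarith

end IsAAdjoint

section NumericalRadius
variable {A T S P : H →L[ℂ] H}

omit [CompleteSpace H] in
theorem wA_nonneg (A T : H →L[ℂ] H) : 0 ≤ wA A T :=
  Real.sSup_nonneg (by rintro r ⟨x, -, rfl⟩; exact norm_nonneg _)

theorem bddAbove_norm_innA_apply_self (hA : A.IsPositive) (h : IsAAdjoint A T S) :
    BddAbove {r : ℝ | ∃ x : H, vnormA A x = 1 ∧ r = ‖innA A (T x) x‖} := by
  refine ⟨√‖S * T‖, ?_⟩
  rintro r ⟨x, hx, rfl⟩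
  have hTx := h.sq_vnormA_apply_le_opNorm_mul hA x
  rw [hx, one_pow, mul_one] at hTx
  calc ‖innA A (T x) x‖ ≤ vnormA A (T x) * vnormA A x := norm_innA_le hA _ _
    _ ≤ √‖S * T‖ := by rw [hx, mul_one]; exact Real.le_sqrt_of_sq_le hTx

theorem norm_innA_le_wA_mul (hA : A.IsPositive) (h : IsAAdjoint A T S) (y : H) :
    ‖innA A (T y) y‖ ≤ wA A T * vnormA A y ^ 2 := by
  rcases (vnormA_nonneg A y).eq_or_lt with hy | hy
  · have := norm_innA_le hA (T y) y
    rw [← hy, mul_zero] at this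
    rw [← hy, sq, mul_zero, mul_zero]
    exact this
  · set c : ℂ := (((vnormA A y)⁻¹ : ℝ) : ℂ)
    have hc : ‖c‖ = (vnormA A y)⁻¹ := by
      rw [Complex.norm_real, Real.norm_of_nonneg (by positivity)]
    have hu : vnormA A (c • y) = 1 := by rw [vnormA_smul hA, hc, inv_mul_cancel₀ hy.ne']
    have hle : ‖innA A (T (c • y)) (c • y)‖ ≤ wA A T :=
      le_csSup (bddAbove_norm_innA_apply_self hA h) ⟨c • y, hu, rfl⟩
    rwa [map_smul, innA_smul_left, innA_smul_right, norm_mul, norm_mul, Complex.norm_conj, hc,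
      ← mul_assoc, ← sq, inv_pow, inv_mul_le_iff₀ (by positivity), mul_comm] at hle

theorem norm_innA_realPartRot_le (hA : IsSelfAdjoint A) (h : IsAAdjoint A T S) (φ : ℝ) (y : H) :
    ‖innA A (realPartRot T S φ y) y‖ ≤ ‖innA A (T y) y‖ := by
  have hS : innA A (S y) y = conj (innA A (T y) y) := by
    rw [(h.symm hA).innA_apply_left hA, innA_conj_symm hA]
  have hre : innA A (realPartRot T S φ y) y
      = ((Complex.exp (-(φ * Complex.I)) * innA A (T y) y).re : ℂ) := by
    rw [Complex.re_eq_add_conj, map_mul, conj_exp_neg_ofReal_mul_I, realPartRot, smul_apply,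
      add_apply, smul_apply, smul_apply, innA_smul_left, innA_add_left, innA_smul_left,
      innA_smul_left, hS, conj_exp_ofReal_mul_I, conj_exp_neg_ofReal_mul_I, map_inv₀, map_ofNat]
    ring
  rw [hre, Complex.norm_real, Real.norm_eq_abs]
  refine (Complex.abs_re_le_norm _).trans ?_
  rw [norm_mul, Complex.norm_exp]
  simp

theorem two_mul_re_innA_realPartRot (hA : IsSelfAdjoint A) (h : IsAAdjoint A T S)
    (hP : IsAAdjoint A P P) (φ : ℝ) (x : H) :
    2 * (innA A (P x) (realPartRot T S φ x)).re
      = (Complex.exp (-(φ * Complex.I)) * innA A ((T * P + P * T) x) x).re := by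
  have hTP : innA A ((T * P) x) x = innA A (P x) (S x) := h.innA_apply_left hA _ _
  have hPT : innA A ((P * T) x) x = conj (innA A (P x) (T x)) := by
    rw [mul_apply_eq_comp, hP.innA_apply_left hA, innA_conj_symm hA]
  have hconj : Complex.exp (-(φ * Complex.I)) * conj (innA A (P x) (T x))
      = conj (Complex.exp (φ * Complex.I) * innA A (P x) (T x)) := by
    rw [map_mul, conj_exp_ofReal_mul_I]
  rw [add_apply, innA_add_left, hTP, hPT, mul_add, hconj, Complex.add_re, Complex.conj_re,
    realPartRot, smul_apply, add_apply, smul_apply, smul_apply, innA_smul_right, innA_add_right,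
    innA_smul_right, innA_smul_right, show (2:ℂ)⁻¹ = ((2⁻¹ : ℝ) : ℂ) by push_cast; rfl,
    Complex.re_ofReal_mul, Complex.add_re]
  ring

end NumericalRadius

theorem le_wA_pow_four_of_vnormA_eq_one {A T S : H →L[ℂ] H} (hA : A.IsPositive)
    (h : IsAAdjoint A T S) {x : H} (hx : vnormA A x = 1) :
    (1/4) * CA A (T ^ 2) (S ^ 2) ^ 2
      + (1/8) * cA A (T ^ 2 * (S * T + T * S) + (S * T + T * S) * T ^ 2)
      + (1/16) * vnormA A ((S * T + T * S) x) ^ 2 ≤ wA A T ^ 4 := by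
  have hsa := hA.isSelfAdjoint
  set P := S * T + T * S
  set z := innA A ((T ^ 2 * P + P * T ^ 2) x) x
  set G := realPartRot T S (z.arg / 2)
  set R := realPartRot (T ^ 2) (S ^ 2) z.arg
  have hP : IsAAdjoint A P P := ((h.symm hsa).mul h).add (h.mul (h.symm hsa))
  have hG : IsAAdjoint A G G := h.realPartRot hsa _
  have hGnum : ∀ y, ‖innA A (G y) y‖ ≤ wA A T * vnormA A y ^ 2 := fun y =>
    (norm_innA_realPartRot_le hsa h _ y).trans (norm_innA_le_wA_mul hA h y)
  have hGG : vnormA A (G (G x)) ^ 2 ≤ wA A T ^ 4 := by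
    have h1 := hG.sq_vnormA_apply_le_of_norm_innA_le hA (wA_nonneg A T) hGnum (G x)
    have h2 := hG.sq_vnormA_apply_le_of_norm_innA_le hA (wA_nonneg A T) hGnum x
    rw [hx, one_pow, mul_one] at h2
    nlinarith [sq_nonneg (wA A T)]
  have hcross : 2 * (innA A (P x) (R x)).re = ‖z‖ := by
    rw [two_mul_re_innA_realPartRot hsa (h.pow 2) hP, exp_neg_arg_mul_I_mul_self,
      Complex.ofReal_re]
  have hexpand : vnormA A (G (G x)) ^ 2
      = (1/16) * vnormA A (P x) ^ 2 + (1/8) * ‖z‖ + (1/4) * vnormA A (R x) ^ 2 := by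
    have h2 : ‖(2:ℂ)⁻¹‖ = 2⁻¹ := by simp
    have h4 : ‖(4:ℂ)⁻¹‖ = 4⁻¹ := by simp
    rw [← mul_apply_eq_comp, ← sq, realPartRot_half_sq, add_apply, smul_apply, smul_apply,
      vnormA_add_sq hA, vnormA_smul hA, vnormA_smul hA, innA_smul_left, innA_smul_right, map_inv₀,
      map_ofNat, ← mul_assoc, show (4:ℂ)⁻¹ * 2⁻¹ = ((8⁻¹ : ℝ) : ℂ) by push_cast; norm_num,
      Complex.re_ofReal_mul, h2, h4, ← hcross]
    ring
  have hC : CA A (T ^ 2) (S ^ 2) ≤ vnormA A (R x) :=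
    csInf_le ⟨0, by rintro r ⟨y, φ, -, rfl⟩; exact vnormA_nonneg A _⟩ ⟨x, _, hx, rfl⟩
  have hC0 : 0 ≤ CA A (T ^ 2) (S ^ 2) :=
    Real.sInf_nonneg (by rintro r ⟨y, φ, -, rfl⟩; exact vnormA_nonneg A _)
  have hc : cA A (T ^ 2 * P + P * T ^ 2) ≤ ‖z‖ :=
    csInf_le ⟨0, by rintro r ⟨y, -, rfl⟩; exact norm_nonneg _⟩ ⟨x, hx, rfl⟩
  nlinarith [pow_le_pow_left₀ hC0 hC 2]

omit [CompleteSpace H] in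
theorem sq_opNormA'_le {A P : H →L[ℂ] H} {K : ℝ} (hne : ∃ x : H, vnormA A x = 1)
    (h : ∀ x, vnormA A x = 1 → vnormA A (P x) ^ 2 ≤ K) : opNormA' A P ^ 2 ≤ K := by
  obtain ⟨x₀, hx₀⟩ := hne
  have hK : 0 ≤ K := (sq_nonneg _).trans (h x₀ hx₀)
  have hle : opNormA' A P ≤ √K :=
    csSup_le ⟨_, x₀, hx₀, rfl⟩ (by rintro r ⟨x, hx, rfl⟩; exact Real.le_sqrt_of_sq_le (h x hx))
  have h0 : 0 ≤ opNormA' A P :=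
    Real.sSup_nonneg (by rintro r ⟨x, -, rfl⟩; exact vnormA_nonneg A _)
  calc opNormA' A P ^ 2 ≤ √K ^ 2 := pow_le_pow_left₀ h0 hle 2
    _ = K := Real.sq_sqrt hK

theorem stmt17 (A T S : H →L[ℂ] H) (hA : StrictPos A) (hS : IsAAdjoint A T S) :
    (1/4) * (sInf {v : ℝ | ∃ x : H, ∃ φ : ℝ, vnormA A x = 1 ∧
        v = vnormA A (((2:ℂ)⁻¹ • (Complex.exp ((φ : ℝ) * Complex.I) • (T^2) + Complex.exp (-((φ : ℝ) * Complex.I)) • (S^2))) x)})^2 +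
      (1/8) * cA A (T^2 * (S * T + T * S) + (S * T + T * S) * T^2) +
      (1/16) * (opNormA' A (S * T + T * S))^2 ≤ (wA A T)^4 := by
  change (1/4) * CA A (T ^ 2) (S ^ 2) ^ 2 + _ + _ ≤ _
  by_cases hne : ∃ x : H, vnormA A x = 1
  · have := sq_opNormA'_le (P := S * T + T * S)
      (K := 16 * (wA A T ^ 4 - (1/4) * CA A (T ^ 2) (S ^ 2) ^ 2
        - (1/8) * cA A (T ^ 2 * (S * T + T * S) + (S * T + T * S) * T ^ 2)))
      hne fun x hx => by linarith [le_wA_pow_four_of_vnormA_eq_one hA.1 hS hx]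
    linarith
  -- without `A`-unit vectors every `sSup` and `sInf` here is taken over `∅`, hence `0`
  · simp only [not_exists] at hne
    simp [CA, cA, wA, opNormA', hne]
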